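/- Let (W,+) be a commutative semigroup, A an ideal of (W,+), and e ∈ P(A). Then W(e)\A with the operation + is a group (closed under +, with a two-sided identity and inverses) if and only if W(e) ∩ A = W(e) ∩ ⋃_{f ∈ P(A)} (W(f) \ H(f)). -/

import Mathlib

open Pointwise

/-- Principal left ideal W_L(u) = (W + {u}) ∪ {u}. -/
def WLset {W : Type*} [AddSemigroup W] (u : W) : Set W :=
  ((Set.univ : Set W) + ({u} : Set W)) ∪ {u}

/-- Principal right ideal W_R(u) = ({u} + W) ∪ {u}. -/
def WRset {W : Type*} [AddSemigroup W] (u : W) : Set W :=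
  (({u} : Set W) + (Set.univ : Set W)) ∪ {u}

/-- Principal two-sided ideal W(u) = (W_L(u) + W) ∪ W_L(u). -/
def WIset {W : Type*} [AddSemigroup W] (u : W) : Set W :=
  (WLset u + (Set.univ : Set W)) ∪ WLset u

/-- Green L-class. -/
def Lclass {W : Type*} [AddSemigroup W] (u : W) : Set W := {v | WLset u = WLset v}

/-- Green R-class. -/
def Rclass {W : Type*} [AddSemigroup W] (u : W) : Set W := {v | WRset u = WRset v}

/-- Green H-class. -/
def Hclass {W : Type*} [AddSemigroup W] (u : W) : Set W :=
  {v | WLset u = WLset v ∧ WRset u = WRset v}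

def IsLeftIdealSG {W : Type*} [AddSemigroup W] (A : Set W) : Prop :=
  (Set.univ : Set W) + A ⊆ A

def IsRightIdealSG {W : Type*} [AddSemigroup W] (A : Set W) : Prop :=
  A + (Set.univ : Set W) ⊆ A

def IsIdealSG {W : Type*} [AddSemigroup W] (A : Set W) : Prop :=
  IsLeftIdealSG A ∧ IsRightIdealSG A

/-- The set E(W) of idempotents. -/
def Eset (W : Type*) [AddSemigroup W] : Set W := {e | e + e = e}

/-- The Rees order: f ≤_H e iff e + f = f + e = f. -/
def ReesLE {W : Type*} [AddSemigroup W] (f e : W) : Prop := e + f = f ∧ f + e = f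

/-- E^≤(e) = {f ∈ E(W) | f ≤_H e}. -/
def Ele {W : Type*} [AddSemigroup W] (e : W) : Set W := {f ∈ Eset W | ReesLE f e}

/-- E^lin(W): idempotents α such that ≤_H is a total order on E^≤(α). -/
def Elin (W : Type*) [AddSemigroup W] : Set W :=
  {α ∈ Eset W | ∀ f ∈ Ele α, ∀ g ∈ Ele α, ReesLE f g ∨ ReesLE g f}

def Afin (W : Type*) [AddSemigroup W] : Set W :=
  {α ∈ Elin W | (Ele α).Finite ∧ ∀ w ∉ Ele α, w + α = α ∧ α + w = α}

/-- The set A(W) of quasi-absorbing elements. -/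
def AW (W : Type*) [AddSemigroup W] : Set W :=
  {α ∈ Elin W | ∀ w ∉ Ele α, w + α = α ∧ α + w = α}

/-- Ā_n = ⋃_{i=1}^n A_i. -/
def Abar (W : Type*) [AddSemigroup W] : ℕ → Set W
  | 0 => ∅
  | n + 1 => Abar W n ∪ {α | α ∉ Abar W n ∧ ∀ w ∉ Abar W n, w + α = α ∧ α + w = α}

/-- The sets A_n from the stepwise construction. -/
def Astep (W : Type*) [AddSemigroup W] : ℕ → Set W
  | 0 => ∅
  | n + 1 => {α | α ∉ Abar W n ∧ ∀ w ∉ Abar W n, w + α = α ∧ α + w = α}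

/-- The set A_s(W) of stepwise quasi-absorbing elements. -/
def As (W : Type*) [AddSemigroup W] : Set W := {α | ∃ n, α ∈ Astep W n}

/-- The set P(A) of A-primitive idempotents. -/
def Pset {W : Type*} [AddSemigroup W] (A : Set W) : Set W :=
  {e | e ∈ Eset W \ A ∧ ∀ f ∈ Eset W, ReesLE f e → f = e ∨ f ∈ A}

/-- G ⊆ W is a group under +: closed, with a two-sided identity and inverses. -/
def IsGroupOn {W : Type*} [AddSemigroup W] (G : Set W) : Prop :=
  (∀ a ∈ G, ∀ b ∈ G, a + b ∈ G) ∧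
  ∃ e ∈ G, (∀ a ∈ G, a + e = a ∧ e + a = a) ∧
    ∀ a ∈ G, ∃ b ∈ G, a + b = e ∧ b + a = e

/-- D is an A-minimal ideal. -/
def IsMinimalIdealRel {W : Type*} [AddSemigroup W] (A D : Set W) : Prop :=
  IsIdealSG D ∧ ¬ D ⊆ A ∧ ∀ E : Set W, IsIdealSG E → E ⊂ D → E ⊆ A

/-- D is an ideal of the subsemigroup (V,+). -/
def IsIdealIn {W : Type*} [AddSemigroup W] (V D : Set W) : Prop :=
  D ⊆ V ∧ V + D ⊆ D ∧ D + V ⊆ D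

/-- The subsemigroup (V,+) is A-simple. -/
def IsSimpleRel {W : Type*} [AddSemigroup W] (V A : Set W) : Prop :=
  A ⊂ V ∧ ∀ D : Set W, IsIdealIn V D → D = V ∨ D ⊆ A

/-- A bottleneck ideal. -/
def IsBottleneck {W : Type*} [AddSemigroup W] (A : Set W) : Prop :=
  IsIdealSG A ∧ ∀ D : Set W, IsIdealSG D → D ⊆ A ∨ A ⊆ D

/-!
In a commutative semigroup `W(u) = W_L(u) = W_R(u) = {u} ∪ (W + u)`, and for an idempotent `e`
the class `H(e)` is the group of units of the monoid `e + W`; it lies in `W(e) \ A` when `e ∉ A`.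
Both sides of the equivalence turn out to say `W(e) \ A ⊆ H(e)`. If `W(e) \ A` is a group, its
identity is an idempotent below `e` outside `A`, hence equal to `e` by primitivity, and every
element with an inverse relative to `e` lies in `H(e)`. For the set identity, the point is that
`H(e) ∩ W(f) ⊆ A` for primitive `e ≠ f`: the idempotent `e + f` lies below both, so it is either
in `A`, and then absorbs every `x ∈ H(e) ∩ W(f)` into `A`, or equal to `e`, and then `e ≤ f`
forces `e = f`.
-/

section AddSemigroup

variable {W : Type*} [AddSemigroup W] {A : Set W} {e u v x : W}

theorem mem_WLset_iff : v ∈ WLset u ↔ v = u ∨ ∃ w, w + u = v := by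
  simp [WLset]

theorem self_mem_WLset (u : W) : u ∈ WLset u :=
  mem_WLset_iff.2 (Or.inl rfl)

theorem add_mem_WLset (w u : W) : w + u ∈ WLset u :=
  mem_WLset_iff.2 (Or.inr ⟨w, rfl⟩)

theorem WLset_subset_WLset (h : v ∈ WLset u) : WLset v ⊆ WLset u := by
  intro x hx
  rcases mem_WLset_iff.1 hx with rfl | ⟨w, rfl⟩
  · exact h
  rcases mem_WLset_iff.1 h with rfl | ⟨w', rfl⟩
  · exact add_mem_WLset w _
  · rw [← add_assoc]; exact add_mem_WLset _ u

theorem WLset_subset_of_mem (hA : IsLeftIdealSG A) (hu : u ∈ A) : WLset u ⊆ A := by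
  intro x hx
  rcases mem_WLset_iff.1 hx with rfl | ⟨w, rfl⟩
  · exact hu
  · exact hA (Set.add_mem_add (Set.mem_univ w) hu)

theorem add_eq_self_of_mem_WLset (he : e ∈ Eset W) (hx : x ∈ WLset e) : x + e = x := by
  rcases mem_WLset_iff.1 hx with rfl | ⟨w, rfl⟩
  · exact he
  · rw [add_assoc, show e + e = e from he]

theorem Hclass_subset_WLset (u : W) : Hclass u ⊆ WLset u := fun v hv =>
  hv.1 ▸ self_mem_WLset v

theorem Hclass_disjoint (hA : IsLeftIdealSG A) (hu : u ∉ A) : Disjoint (Hclass u) A :=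
  Set.disjoint_left.2 fun _ hv hvA => hu (WLset_subset_of_mem hA hvA (hv.1 ▸ self_mem_WLset u))

theorem Hclass_subset_WIset_diff (hA : IsLeftIdealSG A) (hu : u ∉ A) :
    Hclass u ⊆ WIset u \ A := fun _ hv =>
  ⟨Or.inr (Hclass_subset_WLset u hv), Set.disjoint_left.1 (Hclass_disjoint hA hu) hv⟩

end AddSemigroup

section AddCommSemigroup

variable {W : Type*} [AddCommSemigroup W] {A : Set W} {e f u v x : W}

theorem WRset_eq_WLset (u : W) : WRset u = WLset u := by
  rw [WRset, WLset, add_comm]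

theorem WIset_eq_WLset (u : W) : WIset u = WLset u := by
  refine Set.union_eq_right.2 ?_
  rintro _ ⟨v, hv, w, -, rfl⟩
  simpa only [add_comm w v] using WLset_subset_WLset hv (add_mem_WLset w v)

theorem mem_Hclass_iff : v ∈ Hclass u ↔ u ∈ WLset v ∧ v ∈ WLset u := by
  refine ⟨fun hv => ⟨hv.1 ▸ self_mem_WLset u, Hclass_subset_WLset u hv⟩, fun ⟨hu, hv⟩ => ?_⟩
  have hL : WLset u = WLset v := (WLset_subset_WLset hu).antisymm (WLset_subset_WLset hv)
  exact ⟨hL, by rw [WRset_eq_WLset, WRset_eq_WLset, hL]⟩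

theorem mem_Hclass_iff_of_mem_Eset (he : e ∈ Eset W) :
    x ∈ Hclass e ↔ x + e = x ∧ ∃ y, x + y = e := by
  rw [mem_Hclass_iff]
  constructor
  · rintro ⟨hex, hxe⟩
    refine ⟨add_eq_self_of_mem_WLset he hxe, ?_⟩
    rcases mem_WLset_iff.1 hex with rfl | ⟨w, rfl⟩
    · exact ⟨e, he⟩
    · exact ⟨w, add_comm x w⟩
  · rintro ⟨hxe, y, hxy⟩
    refine ⟨hxy ▸ add_comm y x ▸ add_mem_WLset y x, ?_⟩
    rw [← hxe]
    exact add_mem_WLset x e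

theorem isGroupOn_Hclass (he : e ∈ Eset W) : IsGroupOn (Hclass e) := by
  have he' : e + e = e := he
  simp only [IsGroupOn, mem_Hclass_iff_of_mem_Eset he]
  refine ⟨?_, e, ⟨he, e, he⟩, fun a ha => ⟨ha.1, add_comm e a ▸ ha.1⟩, ?_⟩
  · rintro a ⟨hae, a', ha'⟩ b ⟨hbe, b', hb'⟩
    refine ⟨by rw [add_assoc, hbe], a' + b', ?_⟩
    rw [add_add_add_comm, ha', hb', he']
  · rintro a ⟨hae, a', ha'⟩
    -- `a'` need not lie in `W + e`; its translate `a' + e` does.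
    have hinv : a + (a' + e) = e := by rw [← add_assoc, ha', he']
    refine ⟨a' + e, ⟨by rw [add_assoc, he'], a, by rw [add_comm, hinv]⟩, hinv, ?_⟩
    rw [add_comm, hinv]

theorem Pset.eq_or_mem_of_mem_WIset (he : e ∈ Pset A) (hf : f ∈ Eset W) (hfe : f ∈ WIset e) :
    f = e ∨ f ∈ A := by
  rw [WIset_eq_WLset] at hfe
  have hfe' : f + e = f := add_eq_self_of_mem_WLset he.1.1 hfe
  exact he.2 f hf ⟨add_comm e f ▸ hfe', hfe'⟩

theorem diff_subset_Hclass_of_isGroupOn (he : e ∈ Pset A) (hG : IsGroupOn (WIset e \ A)) :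
    WIset e \ A ⊆ Hclass e := by
  obtain ⟨-, ε, hε, hid, hinv⟩ := hG
  have hεe : ε = e := (Pset.eq_or_mem_of_mem_WIset he (hid ε hε).1 hε.1).resolve_right hε.2
  subst hεe
  intro x hx
  obtain ⟨y, -, hxy, -⟩ := hinv x hx
  exact (mem_Hclass_iff_of_mem_Eset he.1.1).2 ⟨(hid x hx).1, y, hxy⟩

theorem isGroupOn_WIset_diff_iff (hA : IsLeftIdealSG A) (he : e ∈ Pset A) :
    IsGroupOn (WIset e \ A) ↔ WIset e \ A ⊆ Hclass e := by
  refine ⟨diff_subset_Hclass_of_isGroupOn he, fun h => ?_⟩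
  rw [h.antisymm (Hclass_subset_WIset_diff hA he.1.2)]
  exact isGroupOn_Hclass he.1.1

theorem Pset.eq_of_mem_Hclass_of_mem_WIset (hA : IsLeftIdealSG A) (he : e ∈ Pset A)
    (hf : f ∈ Pset A) (hxe : x ∈ Hclass e) (hxf : x ∈ WIset f) (hxA : x ∉ A) : e = f := by
  have hef : e + f ∈ Eset W := by
    show e + f + (e + f) = e + f
    rw [add_add_add_comm, he.1.1, hf.1.1]
  have hefe : e + f ∈ WIset e := by
    rw [WIset_eq_WLset, add_comm]
    exact add_mem_WLset f e
  rcases Pset.eq_or_mem_of_mem_WIset he hef hefe with hefe_eq | hefA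
  · have heWf : e ∈ WIset f := by
      rw [WIset_eq_WLset, ← hefe_eq]
      exact add_mem_WLset e f
    exact (Pset.eq_or_mem_of_mem_WIset hf he.1.1 heWf).resolve_right he.1.2
  · rw [WIset_eq_WLset] at hxf
    have hx : x + (e + f) = x := by
      rw [← add_assoc, add_eq_self_of_mem_WLset he.1.1 (Hclass_subset_WLset e hxe),
        add_eq_self_of_mem_WLset hf.1.1 hxf]
    exact absurd (hx ▸ hA (Set.add_mem_add (Set.mem_univ x) hefA)) hxA

theorem WIset_inter_eq_iff (hA : IsLeftIdealSG A) (he : e ∈ Pset A) :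
    WIset e ∩ A = WIset e ∩ ⋃ f ∈ Pset A, (WIset f \ Hclass f) ↔ WIset e \ A ⊆ Hclass e := by
  simp only [Set.ext_iff, Set.mem_inter_iff, Set.mem_iUnion, Set.mem_sdiff, exists_prop]
  constructor
  · intro h x ⟨hxe, hxA⟩
    by_contra hxH
    exact hxA ((h x).2 ⟨hxe, e, he, hxe, hxH⟩).2
  · intro h x
    refine ⟨fun ⟨hxe, hxA⟩ => ⟨hxe, e, he, hxe, fun hxH => ?_⟩,
      fun ⟨hxe, f, hf, hxf, hxH⟩ => ⟨hxe, ?_⟩⟩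
    · exact Set.disjoint_left.1 (Hclass_disjoint hA he.1.2) hxH hxA
    · by_contra hxA
      have hxHe := h ⟨hxe, hxA⟩
      exact hxH (Pset.eq_of_mem_Hclass_of_mem_WIset hA he hf hxHe hxf hxA ▸ hxHe)

end AddCommSemigroup

theorem group_iff_intersection {W : Type*} [AddCommSemigroup W] (A : Set W)
    (hA : IsIdealSG A) (e : W) (he : e ∈ Pset A) :
    IsGroupOn (WIset e \ A) ↔
      WIset e ∩ A = WIset e ∩ ⋃ f ∈ Pset A, (WIset f \ Hclass f) := by
  rw [isGroupOn_WIset_diff_iff hA.1 he, WIset_inter_eq_iff hA.1 he]
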